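/- The function f(x) = [((sin x/x)^2 + (tan x)/x − 2)/(x^3 tan x) − (8/45 − (8/945)x^2)]/x^4 is strictly increasing on (0, π/2). -/

import Mathlib

/-!
With `tan = sin / cos` the function becomes `g x = N x / x ^ 9`, where
`N x = sin x cos x + x - 2 x² cot x - 8/45 x⁵ + 8/945 x⁷`, and `g' = P / (x¹⁰ sin² x)` with `P`
a polynomial in `x`, `sin x`, `cos x`. As `P = O(x¹³)`, `P > 0` needs sharp estimates: the Taylor
polynomials of `sin` and `cos` bound them alternately from above and below on `[0, ∞)`, and
substituting the bound of the right side for each occurrence leaves `x¹³ Q(x²)` with an explicit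
`Q` of degree 20. Its coefficients decay so fast that Horner's scheme in interval arithmetic on
`[0, 5/2]` already shows `Q > 0`.
-/

open Real Finset Nat

noncomputable def sinTaylor (n : ℕ) (x : ℝ) : ℝ :=
  ∑ k ∈ range n, (-1) ^ k * x ^ (2 * k + 1) / (2 * k + 1)!

noncomputable def cosTaylor (n : ℕ) (x : ℝ) : ℝ :=
  ∑ k ∈ range n, (-1) ^ k * x ^ (2 * k) / (2 * k)!

@[simp] lemma sinTaylor_zero_right (n : ℕ) : sinTaylor n 0 = 0 := by
  simp [sinTaylor]

@[simp] lemma cosTaylor_succ_zero_right (n : ℕ) : cosTaylor (n + 1) 0 = 1 := by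
  simp [cosTaylor, sum_range_succ']

lemma hasDerivAt_sinTaylor (n : ℕ) (x : ℝ) : HasDerivAt (sinTaylor n) (cosTaylor n x) x := by
  refine (HasDerivAt.fun_sum fun k _ ↦
    ((hasDerivAt_pow _ x).const_mul _).div_const _).congr_deriv (sum_congr rfl fun k _ ↦ ?_)
  rw [factorial_succ]
  push_cast
  field_simp

lemma hasDerivAt_cosTaylor_succ (n : ℕ) (x : ℝ) :
    HasDerivAt (cosTaylor (n + 1)) (-sinTaylor n x) x := by
  refine (HasDerivAt.fun_sum fun k _ ↦
    ((hasDerivAt_pow _ x).const_mul _).div_const _).congr_deriv ?_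
  rw [sum_range_succ', sinTaylor, ← sum_neg_distrib]
  simp only [mul_zero, pow_zero, Nat.cast_zero, zero_mul, zero_div, add_zero]
  refine sum_congr rfl fun k _ ↦ ?_
  rw [show 2 * (k + 1) = 2 * k + 1 + 1 by ring, factorial_succ]
  push_cast
  field_simp
  ring

lemma apply_zero_le_of_hasDerivAt_nonneg {f f' : ℝ → ℝ} (hf : ∀ x, HasDerivAt f (f' x) x)
    (hf' : ∀ x, 0 ≤ x → 0 ≤ f' x) {t : ℝ} (ht : 0 ≤ t) : f 0 ≤ f t :=
  monotoneOn_of_hasDerivWithinAt_nonneg (convex_Ici 0)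
    (fun x _ ↦ (hf x).continuousAt.continuousWithinAt) (fun x _ ↦ (hf x).hasDerivWithinAt)
    (fun x hx ↦ hf' x (interior_subset hx)) Set.self_mem_Ici ht ht

lemma taylor_sub_cos_sin_alternating (n : ℕ) {t : ℝ} (ht : 0 ≤ t) :
    0 ≤ (-1) ^ n * (cosTaylor (n + 1) t - cos t) ∧
      0 ≤ (-1) ^ n * (sinTaylor (n + 1) t - sin t) := by
  induction n generalizing t with
  | zero => simp [sinTaylor, cosTaylor, cos_le_one, sin_le ht]
  | succ n ih =>
    have hcos : ∀ x, 0 ≤ x → 0 ≤ (-1) ^ (n + 1) * (cosTaylor (n + 2) x - cos x) := by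
      intro x hx
      simpa using apply_zero_le_of_hasDerivAt_nonneg
        (fun y ↦ ((hasDerivAt_cosTaylor_succ (n + 1) y).sub (hasDerivAt_cos y)).const_mul
          ((-1) ^ (n + 1) : ℝ))
        (fun y hy ↦ by linear_combination (ih hy).2) hx
    refine ⟨hcos t ht, ?_⟩
    simpa using apply_zero_le_of_hasDerivAt_nonneg
      (fun y ↦ ((hasDerivAt_sinTaylor (n + 2) y).sub (hasDerivAt_sin y)).const_mul
        ((-1) ^ (n + 1) : ℝ)) hcos ht

lemma sin_le_sinTaylor {n : ℕ} (hn : Even n) {t : ℝ} (ht : 0 ≤ t) :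
    sin t ≤ sinTaylor (n + 1) t := by
  simpa [hn.neg_one_pow] using (taylor_sub_cos_sin_alternating n ht).2

lemma sinTaylor_le_sin {n : ℕ} (hn : Odd n) {t : ℝ} (ht : 0 ≤ t) :
    sinTaylor (n + 1) t ≤ sin t := by
  simpa [hn.neg_one_pow] using (taylor_sub_cos_sin_alternating n ht).2

lemma cosTaylor_le_cos {n : ℕ} (hn : Odd n) {t : ℝ} (ht : 0 ≤ t) :
    cosTaylor (n + 1) t ≤ cos t := by
  simpa [hn.neg_one_pow] using (taylor_sub_cos_sin_alternating n ht).1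


noncomputable def hornerEval : List ℝ → ℝ → ℝ
  | [], _ => 0
  | c :: cs, y => c + y * hornerEval cs y

noncomputable def hornerLowerBound (b : ℝ) : List ℝ → ℝ
  | [] => 0
  | c :: cs => c + b * min 0 (hornerLowerBound b cs)

lemma hornerLowerBound_le_hornerEval {b y : ℝ} (hy : 0 ≤ y) (hyb : y ≤ b) :
    ∀ cs : List ℝ, hornerLowerBound b cs ≤ hornerEval cs y
  | [] => le_rfl
  | c :: cs => by
    have ih := hornerLowerBound_le_hornerEval hy hyb cs
    have hmin : min 0 (hornerLowerBound b cs) ≤ 0 := min_le_left _ _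
    have hmin' : min 0 (hornerLowerBound b cs) ≤ hornerEval cs y :=
      (min_le_right _ _).trans ih
    simp only [hornerLowerBound, hornerEval, add_le_add_iff_left]
    nlinarith

lemma hornerEval_pos {b y : ℝ} {cs : List ℝ} (h : 0 < hornerLowerBound b cs) (hy : 0 ≤ y)
    (hyb : y ≤ b) : 0 < hornerEval cs y :=
  h.trans_le (hornerLowerBound_le_hornerEval hy hyb cs)

lemma sinTaylor_six_nonneg {x : ℝ} (hx : 0 ≤ x) (hx2 : x ^ 2 ≤ 5 / 2) : 0 ≤ sinTaylor 6 x := by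
  rw [show sinTaylor 6 x =
      x * hornerEval [1, -1 / 6, 1 / 120, -1 / 5040, 1 / 362880, -1 / 39916800] (x ^ 2) by
    simp [sinTaylor, hornerEval, sum_range_succ, factorial]; ring]
  exact mul_nonneg hx (hornerEval_pos (by norm_num [hornerLowerBound]) (sq_nonneg x) hx2).le

lemma neg_one_le_cosTaylor_eight {x : ℝ} (hx2 : x ^ 2 ≤ 5 / 2) : -1 ≤ cosTaylor 8 x := by
  have : 0 < hornerEval [2, -1 / 2, 1 / 24, -1 / 720, 1 / 40320, -1 / 3628800, 1 / 479001600,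
      -1 / 87178291200] (x ^ 2) :=
    hornerEval_pos (by norm_num [hornerLowerBound]) (sq_nonneg x) hx2
  simp only [cosTaylor, hornerEval, sum_range_succ, sum_range_zero, factorial] at this ⊢
  norm_num at this ⊢
  linarith

namespace Wilker

noncomputable def f (x : ℝ) : ℝ :=
  (sin x * cos x + x - 2 * x ^ 2 * cos x / sin x - 8 / 45 * x ^ 5 + 8 / 945 * x ^ 7) / x ^ 9

noncomputable def derivNum (x s c : ℝ) : ℝ :=
  2 * x ^ 3 - 7 * x * s ^ 2 - 2 * x * s ^ 4 + (32 / 45 * x ^ 5 - 16 / 945 * x ^ 7) * s ^ 2 +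
    c * (14 * x ^ 2 * s - 9 * s ^ 3)

lemma hasDerivAt_f {x : ℝ} (hx : x ≠ 0) (hs : sin x ≠ 0) :
    HasDerivAt f (derivNum x (sin x) (cos x) / (x ^ 10 * sin x ^ 2)) x := by
  have h := (((((hasDerivAt_sin x).mul (hasDerivAt_cos x)).add (hasDerivAt_id x)).sub
    ((((hasDerivAt_pow 2 x).const_mul 2).mul (hasDerivAt_cos x)).div (hasDerivAt_sin x) hs)).sub
    ((hasDerivAt_pow 5 x).const_mul (8 / 45))).add ((hasDerivAt_pow 7 x).const_mul (8 / 945))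
  refine (h.div (hasDerivAt_pow 9 x) (pow_ne_zero 9 hx)).congr_deriv ?_
  simp only [derivNum, Pi.add_apply, Pi.sub_apply, Pi.mul_apply, Pi.div_apply, id]
  field_simp
  rw [cos_sq']
  ring

/- The last term pays for `c₁ < 0`, which happens for the Taylor lower bound of `cos` near
`π / 2`. -/
noncomputable def derivNumLower (x s₁ s₂ c₁ : ℝ) : ℝ :=
  2 * x ^ 3 - 7 * x * s₂ ^ 2 - 2 * x * s₂ ^ 4 + (32 / 45 * x ^ 5 - 16 / 945 * x ^ 7) * s₁ ^ 2 +
    c₁ * (14 * x ^ 2 * s₁ - 9 * s₂ ^ 3) - (14 * x ^ 2 * (s₂ - s₁) + 9 * (s₂ ^ 3 - s₁ ^ 3))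

lemma derivNumLower_le_derivNum {x s c s₁ s₂ c₁ : ℝ} (hx : 0 ≤ x) (hx42 : x ^ 2 ≤ 42)
    (hsx : s ≤ x) (hs₁ : 0 ≤ s₁) (h₁ : s₁ ≤ s) (h₂ : s ≤ s₂) (hc : c₁ ≤ c) (hc₁ : -1 ≤ c₁) :
    derivNumLower x s₁ s₂ c₁ ≤ derivNum x s c := by
  have hs : 0 ≤ s := hs₁.trans h₁
  have hβ : 0 ≤ 32 / 45 * x ^ 5 - 16 / 945 * x ^ 7 := by
    have : 0 ≤ x ^ 5 * (42 - x ^ 2) := mul_nonneg (by positivity) (by linarith)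
    linarith
  have hsq : s ^ 2 ≤ x ^ 2 := pow_le_pow_left₀ hs hsx 2
  have hF : 0 ≤ 14 * x ^ 2 * s - 9 * s ^ 3 := by nlinarith [mul_le_mul_of_nonneg_left hsq hs]
  have hF₁ : 14 * x ^ 2 * s₁ - 9 * s₂ ^ 3 ≤ 14 * x ^ 2 * s - 9 * s ^ 3 := by
    nlinarith [pow_le_pow_left₀ hs h₂ 3]
  have hF₂ : 14 * x ^ 2 * s - 9 * s ^ 3 ≤ 14 * x ^ 2 * s₂ - 9 * s₁ ^ 3 := by
    nlinarith [pow_le_pow_left₀ hs₁ h₁ 3]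
  have hcF : c₁ * (14 * x ^ 2 * s₁ - 9 * s₂ ^ 3) - (14 * x ^ 2 * (s₂ - s₁) + 9 * (s₂ ^ 3 - s₁ ^ 3))
      ≤ c * (14 * x ^ 2 * s - 9 * s ^ 3) := by
    nlinarith [mul_le_mul_of_nonneg_right hc hF]
  unfold derivNumLower derivNum
  nlinarith [pow_le_pow_left₀ hs h₂ 2, pow_le_pow_left₀ hs h₂ 4, pow_le_pow_left₀ hs₁ h₁ 2]

noncomputable def lowerCoeffs : List ℝ :=
  [16/467775, 507379/59439744000, -183319/71327692800, 26582971/94152554496000,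
    -30999229/1647669703680000, 1159438627/1304954405314560000, -2516616049/78297264318873600000,
    949072567/1017864436145356800000, -173585471/7772782966928179200000,
    9240257359/20520147032690393088000000, -3495107237/451443234719188647936000000,
    667280813/5834035648678745604096000000, -4973268437/3412910854477066178396160000000,
    405731737/25353052061829634468085760000000, -321165847/2129656373193689295319203840000000,
    535853/443678411082018603191500800000000, -7576313/937048804205223289940449689600000000,
    3749/85186254927747571812768153600000000, -1789/9638216271825153839387482521600000000,
    149/269870055611104307502849510604800000000, -19/21049864337666135985222261827174400000000]

lemma derivNumLower_taylor (x : ℝ) :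
    derivNumLower x (sinTaylor 6 x) (sinTaylor 7 x) (cosTaylor 8 x) =
      x ^ 13 * hornerEval lowerCoeffs (x ^ 2) := by
  simp only [derivNumLower, sinTaylor, cosTaylor, lowerCoeffs, hornerEval, sum_range_succ,
    sum_range_zero, factorial]
  norm_num
  ring

lemma derivNum_pos {x : ℝ} (hx₀ : 0 < x) (hx : x < π / 2) : 0 < derivNum x (sin x) (cos x) := by
  have hx2 : x ^ 2 ≤ 5 / 2 := by nlinarith [pi_lt_d2]
  calc 0 < x ^ 13 * hornerEval lowerCoeffs (x ^ 2) :=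
        mul_pos (pow_pos hx₀ 13)
          (hornerEval_pos (by norm_num [lowerCoeffs, hornerLowerBound]) (sq_nonneg x) hx2)
    _ = derivNumLower x (sinTaylor 6 x) (sinTaylor 7 x) (cosTaylor 8 x) :=
        (derivNumLower_taylor x).symm
    _ ≤ derivNum x (sin x) (cos x) :=
        derivNumLower_le_derivNum hx₀.le (by linarith) (sin_le hx₀.le)
          (sinTaylor_six_nonneg hx₀.le hx2) (sinTaylor_le_sin (by decide) hx₀.le)
          (sin_le_sinTaylor (by decide) hx₀.le) (cosTaylor_le_cos (by decide) hx₀.le)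
          (neg_one_le_cosTaylor_eight hx2)

lemma strictMonoOn_f : StrictMonoOn f (Set.Ioo 0 (π / 2)) := by
  have hsin : ∀ x ∈ Set.Ioo 0 (π / 2), 0 < sin x := fun x hx ↦
    sin_pos_of_pos_of_lt_pi hx.1 (by linarith [hx.2, pi_pos])
  refine strictMonoOn_of_hasDerivWithinAt_pos (convex_Ioo _ _)
    (f' := fun x ↦ derivNum x (sin x) (cos x) / (x ^ 10 * sin x ^ 2))
    (fun x hx ↦ (hasDerivAt_f hx.1.ne' (hsin x hx).ne').continuousAt.continuousWithinAt)
    (fun x hx ↦ ?_) (fun x hx ↦ ?_) <;> rw [interior_Ioo] at hx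
  · exact (hasDerivAt_f hx.1.ne' (hsin x hx).ne').hasDerivWithinAt
  · exact div_pos (derivNum_pos hx.1 hx.2) (mul_pos (pow_pos hx.1 10) (pow_pos (hsin x hx) 2))

end Wilker

theorem stmt_16 :
    StrictMonoOn (fun x : ℝ =>
      (((sin x / x) ^ 2 + tan x / x - 2) / (x ^ 3 * tan x) -
        (8 / 45 - (8 / 945) * x ^ 2)) / x ^ 4)
      (Set.Ioo 0 (π / 2)) := by
  refine Wilker.strictMonoOn_f.congr fun x hx ↦ ?_
  have hx₀ : 0 < x := hx.1
  have hs : 0 < sin x := sin_pos_of_pos_of_lt_pi hx₀ (by linarith [hx.2, pi_pos])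
  have hc : 0 < cos x := cos_pos_of_mem_Ioo ⟨by linarith [pi_pos], hx.2⟩
  simp only [Wilker.f, tan_eq_sin_div_cos]
  field_simp
  ring
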